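/- arXiv:1611.09723 — 4 statements merged into one kernel-verified Lean document; each statement's English description precedes it below -/
import Mathlib

section
/- Suppose $\lambda, \mu, \nu > 0$ satisfy $\lambda/\nu < 1 - \lambda/\mu$, and set $\xi = \frac{\lambda}{\nu(1 - \lambda/\mu)}$. Then $0 < \xi < 1$, and the sequence $x^*_n = (1-\xi)\xi^n$, $n \geq 0$, satisfies: (i) $\sum_{n=0}^\infty x^*_n = 1$; (ii) $\lambda x^*_n = \nu \pi^b \, x^*_{n+1}$ for all $n \geq 0$, where $\pi^b = \frac{1}{1 + \frac{\nu}{\mu}(1 - x^*_0)}$. -/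
/-- Single-class complete-graph fixed point: geometric sequence with parameter ξ. -/
theorem single_class_fixed_point
    (lam mu nu : ℝ) (hlam : 0 < lam) (hmu : 0 < mu) (hnu : 0 < nu)
    (hcond : lam / nu < 1 - lam / mu)
    (ξ : ℝ) (hξ : ξ = lam / (nu * (1 - lam / mu)))
    (x : ℕ → ℝ) (hx : ∀ n, x n = (1 - ξ) * ξ ^ n)
    (πb : ℝ) (hπb : πb = 1 / (1 + nu / mu * (1 - x 0))) :
    (0 < ξ ∧ ξ < 1) ∧ (∑' n : ℕ, x n = 1) ∧
      (∀ n : ℕ, lam * x n = nu * πb * x (n + 1)) := by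
  have h1 : 0 < 1 - lam / mu := lt_trans (div_pos hlam hnu) hcond
  have hml : lam < mu := by
    have := (div_lt_one hmu).mp (by linarith)
    linarith [this]
  have hden : 0 < nu * (1 - lam / mu) := mul_pos hnu h1
  have hξ0 : 0 < ξ := by rw [hξ]; exact div_pos hlam hden
  have hξ1 : ξ < 1 := by
    rw [hξ, div_lt_one hden]
    have := (div_lt_iff₀ hnu).mp hcond
    linarith [this]
  refine ⟨⟨hξ0, hξ1⟩, ?_, ?_⟩
  · have : (∑' n : ℕ, x n) = ∑' n : ℕ, (1 - ξ) * ξ ^ n := by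
      exact tsum_congr hx
    rw [this, tsum_mul_left, tsum_geometric_of_lt_one hξ0.le hξ1]
    exact mul_inv_cancel₀ (by linarith : (1:ℝ) - ξ ≠ 0)
  · intro n
    have hmul : 1 - lam / mu = (mu - lam) / mu := by field_simp
    have hmlne : (0:ℝ) < mu - lam := by linarith
    have hξval : ξ = lam * mu / (nu * (mu - lam)) := by
      rw [hξ, hmul]; field_simp
    have hπb' : πb = (mu - lam) / mu := by
      rw [hπb, hx 0]
      have h2 : 1 + nu / mu * (1 - (1 - ξ) * ξ ^ 0) = mu / (mu - lam) := by
        simp only [pow_zero, mul_one, hξval]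
        field_simp
        ring
      rw [h2, one_div, inv_div]
    have key : lam = nu * πb * ξ := by
      rw [hπb', hξval]
      field_simp
    rw [hx n, hx (n+1), pow_succ]
    rw [key]
    ring
end

section
/- For the complete interference graph with classes $c = 1, \dots, C$ and parameters $\lambda_c, \mu_c, \nu_c > 0$, suppose $\max_{c} \lambda_c/\nu_c < 1 - \sum_{d} \lambda_d/\mu_d$. Define $\xi_c = \frac{\lambda_c}{\nu_c (1 - \sum_d \lambda_d/\mu_d)}$. Then $0 < \xi_c < 1$ for all $c$, and with $\pi^b = \frac{1}{1 + \sum_c \frac{\nu_c}{\mu_c}\xi_c}$ the equations $\lambda_c \xi_c^n (1-\xi_c) = \nu_c \pi^b \xi_c^{n+1}(1-\xi_c)$ hold for all $c$ and all $n \geq 0$; i.e., $x^*_{c,n} = (1-\xi_c)\xi_c^n$ is an equilibrium of the mean-field dynamics. -/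
/-!
Write `ρ = 1 - ∑ d, λ_d / μ_d`, so that `ξ_c = λ_c / (ν_c ρ)`. Then
`∑ c, ν_c / μ_c * ξ_c = (1 - ρ) / ρ`, hence `π^b = ρ` and `ν_c π^b ξ_c = λ_c`; each balance
equation is this identity multiplied by `ξ_c ^ n * (1 - ξ_c)`.
-/

lemma div_mul_lt_one_of_div_lt {K : Type*} [Field K] [LinearOrder K] [IsStrictOrderedRing K]
    {a b r : K} (hb : 0 < b) (hr : 0 < r) (h : a / b < r) : a / (b * r) < 1 := by
  rw [div_lt_one (mul_pos hb hr), ← div_lt_iff₀' hb]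
  exact h

lemma sum_div_mul_div_mul_eq {ι K : Type*} [Field K] (s : Finset ι) (lam mu nu : ι → K) (ρ : K)
    (hnu : ∀ d ∈ s, nu d ≠ 0) :
    ∑ d ∈ s, nu d / mu d * (lam d / (nu d * ρ)) = (∑ d ∈ s, lam d / mu d) / ρ := by
  rw [Finset.sum_div]
  refine Finset.sum_congr rfl fun d hd => ?_
  rw [div_mul_div_comm, mul_left_comm (mu d), mul_div_mul_left _ _ (hnu d hd), div_div]

lemma one_div_one_add_div_one_sub {K : Type*} [Field K] {S : K} (h : 1 - S ≠ 0) :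
    1 / (1 + S / (1 - S)) = 1 - S := by
  rw [one_add_div h, sub_add_cancel, one_div_one_div]

lemma mul_pow_mul_eq_mul_pow_succ_mul {R : Type*} [CommMonoid R] {a b x : R} (h : b * x = a)
    (n : ℕ) (y : R) : a * (x ^ n * y) = b * (x ^ (n + 1) * y) := by
  rw [← h, pow_succ']
  simp only [mul_assoc]

theorem complete_graph_equilibrium_general
    (C : ℕ) (lam mu nu : Fin C → ℝ)
    (hlam : ∀ c, 0 < lam c) (hnu : ∀ c, 0 < nu c)
    (hcond : ∀ c, lam c / nu c < 1 - ∑ d, lam d / mu d)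
    (ξ : Fin C → ℝ) (hξ : ∀ c, ξ c = lam c / (nu c * (1 - ∑ d, lam d / mu d)))
    (πb : ℝ) (hπb : πb = 1 / (1 + ∑ c, nu c / mu c * ξ c)) :
    (∀ c, 0 < ξ c ∧ ξ c < 1) ∧
      (∀ c, ∀ n : ℕ,
        lam c * (ξ c ^ n * (1 - ξ c)) = nu c * πb * (ξ c ^ (n + 1) * (1 - ξ c))) := by
  set S := ∑ d, lam d / mu d
  have hS : ∀ c, 0 < 1 - S := fun c => (div_pos (hlam c) (hnu c)).trans (hcond c)
  refine ⟨fun c => ?_, fun c n => ?_⟩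
  · rw [hξ c]
    exact ⟨div_pos (hlam c) (mul_pos (hnu c) (hS c)),
      div_mul_lt_one_of_div_lt (hnu c) (hS c) (hcond c)⟩
  · have hπb_eq : πb = 1 - S := by
      rw [hπb, Finset.sum_congr rfl fun d _ => by rw [hξ d],
        sum_div_mul_div_mul_eq _ _ _ _ _ fun d _ => (hnu d).ne',
        one_div_one_add_div_one_sub (hS c).ne']
    refine mul_pow_mul_eq_mul_pow_succ_mul ?_ n _
    rw [hπb_eq, hξ c, mul_div_cancel₀ _ (mul_pos (hnu c) (hS c)).ne']

/-- Complete interference graph: the geometric profile `(1-ξ_c)ξ_c^n` is an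
equilibrium of the mean-field dynamics. -/
theorem complete_graph_equilibrium
    (C : ℕ) (lam mu nu : Fin C → ℝ)
    (hlam : ∀ c, 0 < lam c) (hmu : ∀ c, 0 < mu c) (hnu : ∀ c, 0 < nu c)
    (hcond : ∀ c, lam c / nu c < 1 - ∑ d, lam d / mu d)
    (ξ : Fin C → ℝ) (hξ : ∀ c, ξ c = lam c / (nu c * (1 - ∑ d, lam d / mu d)))
    (πb : ℝ) (hπb : πb = 1 / (1 + ∑ c, nu c / mu c * ξ c)) :
    (∀ c, 0 < ξ c ∧ ξ c < 1) ∧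
      (∀ c, ∀ n : ℕ,
        lam c * (ξ c ^ n * (1 - ξ c)) = nu c * πb * (ξ c ^ (n + 1) * (1 - ξ c))) :=
  complete_graph_equilibrium_general C lam mu nu hlam hnu hcond ξ hξ πb hπb
end

section
/- For the complete interference graph mean-field equations, any equilibrium $x^* \in E^1$ (i.e., with $\sum_n x^*_{c,n} = 1$ for each class $c$) necessarily satisfies $x^*_{c,n} = (1 - \xi_c)\xi_c^n$ with $\xi_c = \frac{\lambda_c}{\nu_c(1 - \sum_d \lambda_d/\mu_d)}$; in particular the equilibrium in $E^1$ is unique. -/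
/-- Complete interference graph: any equilibrium in `E¹` is the geometric one;
in particular the equilibrium is unique. -/
theorem complete_graph_equilibrium_unique
    (C : ℕ) (lam mu nu : Fin C → ℝ)
    (hlam : ∀ c, 0 < lam c) (hmu : ∀ c, 0 < mu c) (hnu : ∀ c, 0 < nu c)
    (hcond : ∀ c, lam c / nu c < 1 - ∑ d, lam d / mu d)
    (hload : ∑ d, lam d / mu d < 1)
    (x : Fin C → ℕ → ℝ)
    (hxnn : ∀ c n, 0 ≤ x c n)
    (hxsum : ∀ c, ∑' n : ℕ, x c n = 1)
    (πb : ℝ) (hπb : πb = (1 + ∑ c, nu c / mu c * (1 - x c 0))⁻¹)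
    (heq0 : ∀ c, -(lam c) * x c 0 + nu c * πb * x c 1 = 0)
    (heqn : ∀ c, ∀ n : ℕ,
      lam c * (x c n - x c (n + 1)) + nu c * πb * (x c (n + 2) - x c (n + 1)) = 0) :
    ∀ c n, x c n = (1 - lam c / (nu c * (1 - ∑ d, lam d / mu d))) *
      (lam c / (nu c * (1 - ∑ d, lam d / mu d))) ^ n := by
  set S := ∑ d, lam d / mu d with hS
  -- summability
  have hsum : ∀ c, Summable (x c) := by
    intro c
    by_contra h
    have h0 := tsum_eq_zero_of_not_summable h
    rw [hxsum c] at h0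
    norm_num at h0
  have hx0le : ∀ c, x c 0 ≤ 1 := by
    intro c
    rw [← hxsum c]
    exact Summable.le_tsum (hsum c) 0 (fun n _ => hxnn c n)
  have hπpos : 0 < πb := by
    rw [hπb]
    apply inv_pos.mpr
    have h1 : 0 ≤ ∑ c, nu c / mu c * (1 - x c 0) := by
      apply Finset.sum_nonneg
      intro c _
      exact mul_nonneg (div_nonneg (hnu c).le (hmu c).le) (by linarith [hx0le c])
    linarith
  have key : ∀ c n, lam c * x c n = nu c * πb * x c (n + 1) := by
    intro c n
    induction n with
    | zero => linarith [heq0 c]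
    | succ n ih => linear_combination ih - heqn c n
  have hnuπ : ∀ c, nu c * πb ≠ 0 := fun c => (mul_pos (hnu c) hπpos).ne'
  set r : Fin C → ℝ := fun c => lam c / (nu c * πb) with hr
  have hxgeo : ∀ c n, x c n = x c 0 * r c ^ n := by
    intro c n
    induction n with
    | zero => simp
    | succ n ih =>
      have h2 : x c (n + 1) = r c * x c n := by
        rw [hr]
        rw [div_mul_eq_mul_div, eq_div_iff (hnuπ c)]
        linear_combination (-1 : ℝ) * key c n
      rw [h2, ih]; ring
  have hrpos : ∀ c, 0 < r c := fun c =>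
    div_pos (hlam c) (mul_pos (hnu c) hπpos)
  have hx0pos : ∀ c, 0 < x c 0 := by
    intro c
    rcases (hxnn c 0).lt_or_eq with h | h
    · exact h
    · exfalso
      have hz : ∀ n, x c n = 0 := fun n => by rw [hxgeo c n, ← h, zero_mul]
      have : (∑' n : ℕ, x c n) = 0 := by
        rw [tsum_congr hz]; exact tsum_zero
      rw [hxsum c] at this; norm_num at this
  have hrlt : ∀ c, r c < 1 := by
    intro c
    have hs1 : Summable (fun n : ℕ => x c 0 * r c ^ n) :=
      (hsum c).congr (fun n => hxgeo c n)
    have hs2 : Summable (fun n : ℕ => r c ^ n) := by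
      have := hs1.mul_left (x c 0)⁻¹
      refine this.congr (fun n => ?_)
      rw [← mul_assoc, inv_mul_cancel₀ (hx0pos c).ne', one_mul]
    have := summable_geometric_iff_norm_lt_one.mp hs2
    rwa [Real.norm_eq_abs, abs_of_nonneg (hrpos c).le] at this
  have hx0 : ∀ c, x c 0 = 1 - r c := by
    intro c
    have h1 : (∑' n : ℕ, x c n) = x c 0 * (1 - r c)⁻¹ := by
      rw [tsum_congr (hxgeo c), tsum_mul_left,
        tsum_geometric_of_lt_one (hrpos c).le (hrlt c)]
    rw [hxsum c] at h1
    have h2 : (1 : ℝ) - r c ≠ 0 := by linarith [hrlt c]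
    field_simp at h1
    linarith
  have hsum_eq : ∑ c, nu c / mu c * (1 - x c 0) = S * πb⁻¹ := by
    rw [hS, Finset.sum_mul]
    refine Finset.sum_congr rfl (fun c _ => ?_)
    rw [hx0 c, hr]
    have h1 : nu c ≠ 0 := (hnu c).ne'
    have h2 : mu c ≠ 0 := (hmu c).ne'
    have h3 : πb ≠ 0 := hπpos.ne'
    field_simp
    ring
  have hπS : πb = 1 - S := by
    rw [hsum_eq] at hπb
    have h1 := congrArg Inv.inv hπb
    rw [inv_inv] at h1
    have h3 : πb ≠ 0 := hπpos.ne'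
    field_simp at h1
    linarith
  intro c n
  have hrval : r c = lam c / (nu c * (1 - S)) := by
    rw [hr, hπS]
  rw [hxgeo c n, hx0 c, hrval]
end

section
/- Finite-buffer single-class equilibrium uniqueness: for $\lambda, \mu, \nu > 0$ and integer $K \geq 1$, define for $\xi > 0$: $\tilde\theta(\xi) = \frac{\frac{\nu}{\mu}(1 - \frac{1}{\sum_{n=0}^K \xi^n})}{1 + \frac{\nu}{\mu}(1 - \frac{1}{\sum_{n=0}^K \xi^n})}$ and $\tilde\rho(\xi) = \frac{\lambda}{\mu}(1 - \frac{\xi^K}{\sum_{n=0}^K \xi^n})$. Then $\tilde\theta$ is continuous and strictly increasing on $(0,\infty)$ with $\tilde\theta(0^+) = 0$ and $\lim_{\xi\to\infty}\tilde\theta(\xi) = \frac{\nu/\mu}{1+\nu/\mu}$, while $\tilde\rho$ is continuous and strictly decreasing with $\tilde\rho(0^+) = \lambda/\mu > 0$ and $\lim_{\xi\to\infty}\tilde\rho(\xi) = 0$; hence there exists a unique $\xi > 0$ with $\tilde\theta(\xi) = \tilde\rho(\xi)$. -/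
/-!
Write `S(ξ) = ∑_{n ≤ K} ξⁿ`. Then `θ̃` is an increasing image of `1 - 1/S(ξ)`, while the
reflection identity `ξᴷ S(ξ⁻¹) = S(ξ)` gives `ρ̃(ξ) = (λ/μ)(1 - 1/S(ξ⁻¹))`; so both monotonicity
claims reduce to `S` being strictly increasing on `[0, ∞)`. Both functions are continuous on
`[0, ∞)`, which gives the limits at `0⁺`, and `S → ∞` gives the limits at `∞`. The strictly
increasing `θ̃ - ρ̃` is negative near `0` and positive near `∞`, so it has exactly one zero.
-/

open Filter Set Topology

section GeomSum

open Finset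

variable {R : Type*}

theorem strictMonoOn_geom_sum [Semiring R] [LinearOrder R] [IsStrictOrderedRing R] {n : ℕ}
    (hn : n ≠ 0) : StrictMonoOn (fun x : R => ∑ i ∈ range (n + 1), x ^ i) (Ici 0) := by
  intro a ha b _ hab
  simp only [sum_range_succ' _ n, pow_zero]
  gcongr ?_ + 1
  exact sum_lt_sum_of_nonempty (nonempty_range_iff.2 hn) fun i _ =>
    pow_lt_pow_left₀ hab ha (Nat.succ_ne_zero i)

theorem one_le_geom_sum [Semiring R] [PartialOrder R] [IsOrderedRing R] {x : R} (hx : 0 ≤ x)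
    (n : ℕ) : 1 ≤ ∑ i ∈ range (n + 1), x ^ i := by
  simpa using single_le_sum (f := fun i => x ^ i) (fun i _ => pow_nonneg hx i)
    (mem_range.2 n.succ_pos)

theorem tendsto_geom_sum_atTop [Semiring R] [LinearOrder R] [IsStrictOrderedRing R] {n : ℕ}
    (hn : n ≠ 0) : Tendsto (fun x : R => ∑ i ∈ range (n + 1), x ^ i) atTop atTop := by
  refine tendsto_atTop_mono' atTop ?_ tendsto_id
  filter_upwards [eventually_ge_atTop 0] with x hx
  simpa using single_le_sum (f := fun i => x ^ i) (fun i _ => pow_nonneg hx i)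
    (mem_range.2 (by omega : 1 < n + 1))

theorem geom_sum_inv_mul_pow [Field R] {x : R} (hx : x ≠ 0) (n : ℕ) :
    (∑ i ∈ range (n + 1), x⁻¹ ^ i) * x ^ n = ∑ i ∈ range (n + 1), x ^ i := by
  rw [sum_mul]
  conv_rhs => rw [← sum_range_reflect]
  refine sum_congr rfl fun i hi => ?_
  have hi : i ≤ n := Nat.lt_succ_iff.1 (mem_range.1 hi)
  rw [inv_pow, inv_mul_eq_iff_eq_mul₀ (pow_ne_zero i hx), ← pow_add]
  congr 1
  omega

end GeomSum

theorem ContinuousOn.tendsto_nhdsGT {α β : Type*} [TopologicalSpace α] [LinearOrder α]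
    [TopologicalSpace β] {f : α → β} {a : α} (hf : ContinuousOn f (Ici a)) :
    Tendsto f (𝓝[>] a) (𝓝 (f a)) :=
  (hf.continuousWithinAt self_mem_Ici).tendsto.mono_left (nhdsWithin_mono a Ioi_subset_Ici_self)

theorem existsUnique_eq_of_strictMonoOn_of_strictAntiOn {α β : Type*}
    [ConditionallyCompleteLinearOrder α] [TopologicalSpace α] [OrderTopology α]
    [DenselyOrdered α] [NoMaxOrder α] [LinearOrder β] [TopologicalSpace β]
    [OrderClosedTopology β] {f g : α → β} {a : α} {u v u' v' : β}
    (hf : ContinuousOn f (Ioi a)) (hg : ContinuousOn g (Ioi a))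
    (hf_mono : StrictMonoOn f (Ioi a)) (hg_anti : StrictAntiOn g (Ioi a))
    (hf₀ : Tendsto f (𝓝[>] a) (𝓝 u)) (hg₀ : Tendsto g (𝓝[>] a) (𝓝 v)) (h₀ : u < v)
    (hf_top : Tendsto f atTop (𝓝 u')) (hg_top : Tendsto g atTop (𝓝 v')) (h_top : v' < u') :
    ∃! x, x ∈ Ioi a ∧ f x = g x := by
  obtain ⟨x, hx, hfg⟩ := isPreconnected_Ioi.intermediate_value₂_eventually₂ (l₁ := 𝓝[>] a)
    inf_le_right (le_principal_iff.2 (Ioi_mem_atTop a)) hf hg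
    ((hf₀.eventually_lt hg₀ h₀).mono fun _ => le_of_lt)
    ((hg_top.eventually_lt hf_top h_top).mono fun _ => le_of_lt)
  refine ⟨x, ⟨hx, hfg⟩, fun y ⟨hy, hfgy⟩ => ?_⟩
  by_contra hne
  rcases lt_or_gt_of_ne hne with hlt | hlt
  · exact (hf_mono hy hx hlt).not_ge (by rw [hfg, hfgy]; exact (hg_anti hy hx hlt).le)
  · exact (hf_mono hx hy hlt).not_ge (by rw [hfg, hfgy]; exact (hg_anti hx hy hlt).le)

theorem strictMonoOn_div_one_add {𝕜 : Type*} [Field 𝕜] [LinearOrder 𝕜] [IsStrictOrderedRing 𝕜] :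
    StrictMonoOn (fun t : 𝕜 => t / (1 + t)) (Ioi (-1)) := by
  intro s hs t ht hst
  have hs : 0 < 1 + s := by simp only [mem_Ioi] at hs; linarith
  have ht : 0 < 1 + t := by simp only [mem_Ioi] at ht; linarith
  simp only
  rw [div_lt_div_iff₀ hs ht]
  linarith

namespace FiniteBuffer

variable {K : ℕ} {ξ c a : ℝ}

/-- `emptyProb K ξ` and `fullProb K ξ` are the masses `π₀` and `π_K` of the truncated geometric
law `πₙ ∝ ξⁿ` on `{0, …, K}`. -/
noncomputable def emptyProb (K : ℕ) (ξ : ℝ) : ℝ := 1 / ∑ n ∈ Finset.range (K + 1), ξ ^ n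

noncomputable def fullProb (K : ℕ) (ξ : ℝ) : ℝ := ξ ^ K / ∑ n ∈ Finset.range (K + 1), ξ ^ n

noncomputable def saturatedThroughput (c : ℝ) (K : ℕ) (ξ : ℝ) : ℝ :=
  c * (1 - emptyProb K ξ) / (1 + c * (1 - emptyProb K ξ))

noncomputable def effectiveLoad (a : ℝ) (K : ℕ) (ξ : ℝ) : ℝ := a * (1 - fullProb K ξ)

theorem emptyProb_zero : emptyProb K 0 = 1 := by
  simp [emptyProb]

theorem one_sub_emptyProb_nonneg (hξ : 0 ≤ ξ) : 0 ≤ 1 - emptyProb K ξ :=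
  sub_nonneg.2 (div_le_one_of_le₀ (one_le_geom_sum hξ K) (by positivity))

theorem continuousOn_emptyProb : ContinuousOn (emptyProb K) (Ici 0) :=
  continuousOn_const.div (by fun_prop) fun ξ hξ => (geom_sum_pos (x := ξ) hξ K.succ_ne_zero).ne'

theorem strictAntiOn_emptyProb (hK : K ≠ 0) : StrictAntiOn (emptyProb K) (Ici 0) :=
  fun _ ha _ hb hab => one_div_lt_one_div_of_lt (geom_sum_pos ha K.succ_ne_zero)
    (strictMonoOn_geom_sum hK ha hb hab)

theorem tendsto_emptyProb_atTop (hK : K ≠ 0) : Tendsto (emptyProb K) atTop (𝓝 0) :=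
  (tendsto_inv_atTop_zero.comp (tendsto_geom_sum_atTop hK)).congr fun _ => (one_div _).symm

theorem fullProb_eq_emptyProb_inv (hξ : ξ ≠ 0) : fullProb K ξ = emptyProb K ξ⁻¹ := by
  rw [fullProb, emptyProb, ← geom_sum_inv_mul_pow hξ, div_mul_cancel_right₀ (pow_ne_zero K hξ),
    one_div]

theorem fullProb_zero (hK : K ≠ 0) : fullProb K 0 = 0 := by
  simp [fullProb, hK]

theorem continuousOn_fullProb : ContinuousOn (fullProb K) (Ici 0) :=
  (continuousOn_pow K).div (by fun_prop) fun ξ hξ => (geom_sum_pos (x := ξ) hξ K.succ_ne_zero).ne'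

theorem strictMonoOn_fullProb (hK : K ≠ 0) : StrictMonoOn (fullProb K) (Ioi 0) := by
  intro a ha b hb hab
  rw [fullProb_eq_emptyProb_inv (ne_of_gt ha), fullProb_eq_emptyProb_inv (ne_of_gt hb)]
  exact strictAntiOn_emptyProb hK (mem_Ici.2 (inv_pos.2 hb).le) (mem_Ici.2 (inv_pos.2 ha).le)
    (inv_strictAntiOn ha hb hab)

theorem tendsto_fullProb_atTop : Tendsto (fullProb K) atTop (𝓝 1) := by
  have h := (continuousOn_emptyProb (K := K)).tendsto_nhdsGT.comp tendsto_inv_atTop_nhdsGT_zero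
  rw [emptyProb_zero] at h
  refine h.congr' ?_
  filter_upwards [eventually_gt_atTop 0] with ξ hξ
  exact (fullProb_eq_emptyProb_inv hξ.ne').symm

theorem saturatedThroughput_zero : saturatedThroughput c K 0 = 0 := by
  simp [saturatedThroughput, emptyProb_zero]

theorem continuousOn_saturatedThroughput (hc : 0 ≤ c) :
    ContinuousOn (saturatedThroughput c K) (Ici 0) := by
  have hbusy : ContinuousOn (fun ξ => c * (1 - emptyProb K ξ)) (Ici 0) :=
    continuousOn_const.mul (continuousOn_const.sub continuousOn_emptyProb)
  refine hbusy.div (continuousOn_const.add hbusy) fun ξ hξ => ?_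
  have := mul_nonneg hc (one_sub_emptyProb_nonneg (K := K) hξ)
  positivity

theorem strictMonoOn_saturatedThroughput (hc : 0 < c) (hK : K ≠ 0) :
    StrictMonoOn (saturatedThroughput c K) (Ici 0) := by
  refine strictMonoOn_div_one_add.comp (f := fun ξ => c * (1 - emptyProb K ξ))
    (fun x hx y hy hxy => ?_) fun ξ hξ => ?_
  · have := strictAntiOn_emptyProb hK hx hy hxy
    dsimp only
    gcongr
  · exact neg_one_lt_zero.trans_le (mul_nonneg hc.le (one_sub_emptyProb_nonneg hξ))

theorem tendsto_saturatedThroughput_atTop (hc : 0 ≤ c) (hK : K ≠ 0) :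
    Tendsto (saturatedThroughput c K) atTop (𝓝 (c / (1 + c))) := by
  have hbusy : Tendsto (fun ξ => c * (1 - emptyProb K ξ)) atTop (𝓝 c) := by
    simpa using (tendsto_const_nhds (x := c)).mul
      ((tendsto_const_nhds (x := (1 : ℝ))).sub (tendsto_emptyProb_atTop hK))
  exact hbusy.div (tendsto_const_nhds.add hbusy) (by positivity)

theorem effectiveLoad_zero (hK : K ≠ 0) : effectiveLoad a K 0 = a := by
  simp [effectiveLoad, fullProb_zero hK]

theorem continuousOn_effectiveLoad : ContinuousOn (effectiveLoad a K) (Ici 0) :=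
  continuousOn_const.mul (continuousOn_const.sub continuousOn_fullProb)

theorem strictAntiOn_effectiveLoad (ha : 0 < a) (hK : K ≠ 0) :
    StrictAntiOn (effectiveLoad a K) (Ioi 0) := fun x hx y hy hxy => by
  have := strictMonoOn_fullProb hK hx hy hxy
  unfold effectiveLoad
  gcongr

theorem tendsto_effectiveLoad_atTop : Tendsto (effectiveLoad a K) atTop (𝓝 0) := by
  have h := (tendsto_const_nhds (x := a)).mul
    ((tendsto_const_nhds (x := (1 : ℝ))).sub (tendsto_fullProb_atTop (K := K)))
  rwa [sub_self, mul_zero] at h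

end FiniteBuffer

open FiniteBuffer in
/-- Finite-buffer single-class model: monotonicity, boundary limits of throughput and
effective load, and existence and uniqueness of the equilibrium activity factor. -/
theorem finite_buffer_equilibrium_unique
    (lam mu nu : ℝ) (hlam : 0 < lam) (hmu : 0 < mu) (hnu : 0 < nu)
    (K : ℕ) (hK : 1 ≤ K)
    (θ ρ : ℝ → ℝ)
    (hθ : ∀ ξ, θ ξ =
      (nu / mu * (1 - 1 / ∑ n ∈ Finset.range (K + 1), ξ ^ n)) /
        (1 + nu / mu * (1 - 1 / ∑ n ∈ Finset.range (K + 1), ξ ^ n)))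
    (hρ : ∀ ξ, ρ ξ =
      lam / mu * (1 - ξ ^ K / ∑ n ∈ Finset.range (K + 1), ξ ^ n)) :
    ContinuousOn θ (Set.Ioi 0) ∧ StrictMonoOn θ (Set.Ioi 0) ∧
    Tendsto θ (nhdsWithin 0 (Set.Ioi 0)) (nhds 0) ∧
    Tendsto θ atTop (nhds ((nu / mu) / (1 + nu / mu))) ∧
    ContinuousOn ρ (Set.Ioi 0) ∧ StrictAntiOn ρ (Set.Ioi 0) ∧
    Tendsto ρ (nhdsWithin 0 (Set.Ioi 0)) (nhds (lam / mu)) ∧ 0 < lam / mu ∧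
    Tendsto ρ atTop (nhds 0) ∧
    (∃! ξ : ℝ, ξ ∈ Set.Ioi (0:ℝ) ∧ θ ξ = ρ ξ) := by
  obtain rfl : θ = saturatedThroughput (nu / mu) K := funext hθ
  obtain rfl : ρ = effectiveLoad (lam / mu) K := funext hρ
  have hK : K ≠ 0 := Nat.one_le_iff_ne_zero.1 hK
  have hc : 0 < nu / mu := div_pos hnu hmu
  have ha : 0 < lam / mu := div_pos hlam hmu
  have hθ_cont := (continuousOn_saturatedThroughput (K := K) hc.le).mono Ioi_subset_Ici_self
  have hθ_mono := (strictMonoOn_saturatedThroughput hc hK).mono Ioi_subset_Ici_self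
  have hθ₀ := (continuousOn_saturatedThroughput (K := K) hc.le).tendsto_nhdsGT
  rw [saturatedThroughput_zero] at hθ₀
  have hθ_top := tendsto_saturatedThroughput_atTop hc.le hK
  have hρ_cont := (continuousOn_effectiveLoad (a := lam / mu) (K := K)).mono Ioi_subset_Ici_self
  have hρ_anti := strictAntiOn_effectiveLoad ha hK
  have hρ₀ := (continuousOn_effectiveLoad (a := lam / mu) (K := K)).tendsto_nhdsGT
  rw [effectiveLoad_zero hK] at hρ₀
  have hρ_top := tendsto_effectiveLoad_atTop (a := lam / mu) (K := K)
  exact ⟨hθ_cont, hθ_mono, hθ₀, hθ_top, hρ_cont, hρ_anti, hρ₀, ha, hρ_top,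
    existsUnique_eq_of_strictMonoOn_of_strictAntiOn hθ_cont hρ_cont hθ_mono hρ_anti hθ₀ hρ₀ ha
      hθ_top hρ_top (by positivity)⟩
end
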